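/- Let e₁, …, e_d be a basis of ℝ^d, let X = {±e₁, …, ±e_d}, and set X_i = X for all i ∈ {1, …, 2d}. Then pos X_i = ℝ^d for each i, yet for every proper subset I ⊊ {1,…,2d} and every choice of points x_i ∈ X_i (i ∈ I), pos {x_i : i ∈ I} ≠ ℝ^d. -/

import Mathlib

open scoped BigOperators

/-- The positive (conic) hull of a set: all finite nonnegative linear combinations. -/
def posHull {d : ℕ} (A : Set (EuclideanSpace ℝ (Fin d))) : Set (EuclideanSpace ℝ (Fin d)) :=
  {x | ∃ (n : ℕ) (c : Fin n → ℝ) (f : Fin n → EuclideanSpace ℝ (Fin d)),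
    (∀ i, 0 ≤ c i) ∧ (∀ i, f i ∈ A) ∧ x = ∑ i, c i • f i}

/-- `B` is a positive basis of the set `L` (typically a linear subspace). -/
def IsPosBasisOf {d : ℕ} (B L : Set (EuclideanSpace ℝ (Fin d))) : Prop :=
  posHull B = L ∧ ∀ b ∈ B, posHull (B \ {b}) ≠ L

/-!
The set `X = {±e₁, …, ±e_d}` is a positive basis of `ℝ^d`: its positive hull is everything,
since `X` is symmetric and spans, while removing `±e_j` leaves a set on which the functional
`±e_j^*` is nonpositive. As `X` has `2d` elements, `|I| < 2d` points of `X` miss one of them,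
so they lie in some `X \ {±e_j}` and cannot positively span `ℝ^d`.
-/

open Set Module

namespace PointedCone

theorem span_le_hull_union_neg {R E : Type*} [Ring R] [LinearOrder R] [IsOrderedRing R]
    [AddCommGroup E] [Module R E] (s : Set E) :
    (Submodule.span R s : PointedCone R E) ≤ hull R (s ∪ -s) :=
  -- `s` lies in the lineality space of the hull, which is a submodule.
  gc_ofSubmodule_lineal.le_iff_le.mpr <| Submodule.span_le.mpr fun x hx =>
    ⟨subset_hull (Or.inl hx), subset_hull (Or.inr (by simpa using hx))⟩

end PointedCone

section posHull

variable {d : ℕ} {A B : Set (EuclideanSpace ℝ (Fin d))}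

theorem posHull_eq_hull (A : Set (EuclideanSpace ℝ (Fin d))) :
    posHull A = PointedCone.hull ℝ A := by
  ext x
  rw [SetLike.mem_coe, Submodule.mem_span_set']
  constructor
  · rintro ⟨n, c, f, hc, hf, rfl⟩
    exact ⟨n, fun i => ⟨c i, hc i⟩, fun i => ⟨f i, hf i⟩, by simp⟩
  · rintro ⟨n, c, f, rfl⟩
    exact ⟨n, fun i => c i, fun i => f i, fun i => (c i).2, fun i => (f i).2, by simp⟩

theorem posHull_mono (h : A ⊆ B) : posHull A ⊆ posHull B := by
  rw [posHull_eq_hull, posHull_eq_hull]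
  exact SetLike.coe_subset_coe.mpr (Submodule.span_mono h)

theorem map_nonpos_of_mem_posHull (φ : EuclideanSpace ℝ (Fin d) →ₗ[ℝ] ℝ)
    (hA : ∀ a ∈ A, φ a ≤ 0) {x : EuclideanSpace ℝ (Fin d)} (hx : x ∈ posHull A) :
    φ x ≤ 0 := by
  obtain ⟨n, c, f, hc, hf, rfl⟩ := hx
  rw [map_sum]
  exact Finset.sum_nonpos fun i _ => by
    rw [map_smul]
    exact smul_nonpos_of_nonneg_of_nonpos (hc i) (hA _ (hf i))

theorem posHull_ne_univ_of_nonpos (φ : EuclideanSpace ℝ (Fin d) →ₗ[ℝ] ℝ)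
    (hA : ∀ a ∈ A, φ a ≤ 0) {v : EuclideanSpace ℝ (Fin d)} (hv : 0 < φ v) :
    posHull A ≠ univ := fun h =>
  (map_nonpos_of_mem_posHull φ hA (h ▸ mem_univ v)).not_gt hv

theorem posHull_union_neg_eq_univ {s : Set (EuclideanSpace ℝ (Fin d))}
    (hs : Submodule.span ℝ s = ⊤) : posHull (s ∪ -s) = univ := by
  rw [posHull_eq_hull, eq_univ_iff_forall]
  exact fun x => PointedCone.span_le_hull_union_neg s (by simp [hs])

theorem IsPosBasisOf.eq_of_subset {L : Set (EuclideanSpace ℝ (Fin d))} (hB : IsPosBasisOf B L)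
    (hAB : A ⊆ B) (hA : posHull A = L) : A = B := by
  by_contra hne
  obtain ⟨b, hbB, hbA⟩ := exists_of_ssubset (hAB.ssubset_of_ne hne)
  refine hB.2 b hbB (subset_antisymm ?_ ?_)
  · exact hB.1 ▸ posHull_mono sdiff_subset
  · exact hA ▸ posHull_mono fun a ha => ⟨hAB ha, fun hab => hbA (hab ▸ ha)⟩

end posHull

namespace Module.Basis

theorem coord_self_apply_of_ne {ι R M : Type*} [Semiring R] [AddCommMonoid M] [Module R M]
    (b : Basis ι R M) {i j : ι} (h : j ≠ i) : b.coord i (b j) = 0 := by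
  classical
  rw [coord_apply, repr_self_apply, if_neg h]

variable {ι 𝕜 E : Type*} [Field 𝕜] [LinearOrder 𝕜] [IsStrictOrderedRing 𝕜]
  [AddCommGroup E] [Module 𝕜 E] (b : Basis ι 𝕜 E)

theorem coord_self_apply_nonneg (i j : ι) : 0 ≤ b.coord i (b j) := by
  classical
  rw [coord_apply, repr_self_apply]
  split_ifs <;> norm_num

theorem disjoint_range_neg_range : Disjoint (range b) (-range b) := by
  rw [disjoint_left]
  rintro _ ⟨i, rfl⟩ ⟨j, hj⟩
  have hij := congrArg (b.coord i) hj
  have hii : b.coord i (b i) = 1 := by simp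
  rw [map_neg, hii] at hij
  linarith [b.coord_self_apply_nonneg i j]

theorem ncard_range_union_neg_range [Finite ι] :
    (range b ∪ -range b).ncard = 2 * Nat.card ι := by
  rw [ncard_union_eq b.disjoint_range_neg_range (finite_range b) (finite_range b).neg,
    ncard_neg, ncard_range_of_injective b.injective]
  ring

end Module.Basis

theorem Module.Basis.isPosBasisOf_range_union_neg_range {ι : Type*} {d : ℕ}
    (b : Basis ι ℝ (EuclideanSpace ℝ (Fin d))) : IsPosBasisOf (range b ∪ -range b) univ := by
  refine ⟨posHull_union_neg_eq_univ b.span_eq, ?_⟩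
  rw [neg_range']
  rintro _ (⟨j, rfl⟩ | ⟨j, rfl⟩)
  · refine posHull_ne_univ_of_nonpos (b.coord j) ?_ (v := b j) (by simp)
    rintro _ ⟨⟨k, rfl⟩ | ⟨k, rfl⟩, hne⟩
    · exact (b.coord_self_apply_of_ne fun hkj => hne (by rw [hkj]; rfl)).le
    · simpa using b.coord_self_apply_nonneg j k
  · refine posHull_ne_univ_of_nonpos (-b.coord j) ?_ (v := (-⇑b) j) (by simp)
    rintro _ ⟨⟨k, rfl⟩ | ⟨k, rfl⟩, hne⟩
    · simpa using b.coord_self_apply_nonneg j k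
    · have hkj : k ≠ j := fun hkj => hne (by rw [hkj]; rfl)
      rw [LinearMap.neg_apply, Pi.neg_apply, map_neg, neg_neg, b.coord_self_apply_of_ne hkj]

theorem bcase_sharp (d : ℕ) (e : Fin d → EuclideanSpace ℝ (Fin d))
    (he : LinearIndependent ℝ e) (hspan : Submodule.span ℝ (Set.range e) = ⊤)
    (X : Fin (2 * d) → Set (EuclideanSpace ℝ (Fin d)))
    (hXdef : ∀ i, X i = Set.range e ∪ (-(Set.range e))) :
    (∀ i, posHull (X i) = Set.univ) ∧
    ∀ I : Finset (Fin (2 * d)), I ≠ Finset.univ →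
      ∀ x : Fin (2 * d) → EuclideanSpace ℝ (Fin d),
        (∀ i ∈ I, x i ∈ X i) → posHull (x '' ↑I) ≠ Set.univ := by
  have hbasis : IsPosBasisOf (range e ∪ -range e) univ := by
    simpa using (Basis.mk he hspan.ge).isPosBasisOf_range_union_neg_range
  have hcard : (range e ∪ -range e).ncard = 2 * d := by
    simpa using (Basis.mk he hspan.ge).ncard_range_union_neg_range
  refine ⟨fun i => hXdef i ▸ hbasis.1, fun I hI x hx hspanI => ?_⟩
  have hsub : x '' I ⊆ range e ∪ -range e := by
    rintro _ ⟨i, hi, rfl⟩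
    exact hXdef i ▸ hx i hi
  have hI : I.card < 2 * d := by simpa using Finset.card_lt_card (Finset.ssubset_univ_iff.mpr hI)
  have himage : (x '' I).ncard ≤ I.card :=
    (ncard_image_le I.finite_toSet).trans_eq (ncard_coe_finset I)
  rw [hbasis.eq_of_subset hsub hspanI, hcard] at himage
  omega
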